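/- arXiv:1907.06138 — 5 statements merged into one kernel-verified Lean document; each statement's English description precedes it below -/
import Mathlib

section
/- The regularized Bellman optimality operator, defined on ℝ^S by [T_Ω v](s) = sup over distributions μ ∈ Δ_A of ( Σ_a μ(a)( r(s,a) + γ Σ_{s'} p(s'|s,a) v(s') ) − Ω(μ) ), is a γ-contraction with respect to the supremum norm: for all v, w ∈ ℝ^S, ‖T_Ω v − T_Ω w‖_∞ ≤ γ ‖v − w‖_∞. Moreover the supremum is attained for each s. -/
/-!
For fixed `μ` the objective is affine in `v` with slope `γ` times a stochastic matrix, so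
changing `v` moves it by at most `γ ‖v - w‖` uniformly in `μ`; taking suprema over the simplex
preserves such a uniform bound. The objective is continuous in `μ` and the simplex is compact,
so the supremum is attained.
-/

open Finset

lemma abs_sum_mul_le_norm_of_mem_stdSimplex {ι : Type*} [Fintype ι] {μ : ι → ℝ}
    (hμ : μ ∈ stdSimplex ℝ ι) (x : ι → ℝ) : |∑ i, μ i * x i| ≤ ‖x‖ :=
  calc |∑ i, μ i * x i| ≤ ∑ i, μ i * |x i| := by
        refine (abs_sum_le_sum_abs _ _).trans_eq (sum_congr rfl fun i _ => ?_)
        rw [abs_mul, abs_of_nonneg (hμ.1 i)]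
    _ ≤ ∑ i, μ i * ‖x‖ :=
        sum_le_sum fun i _ => mul_le_mul_of_nonneg_left (norm_le_pi_norm x i) (hμ.1 i)
    _ = ‖x‖ := by rw [← sum_mul, hμ.2, one_mul]

lemma sSup_image_le_sSup_image_add {α : Type*} {K : Set α} {f g : α → ℝ} {c : ℝ}
    (hK : K.Nonempty) (hg : BddAbove (g '' K)) (hfg : ∀ x ∈ K, f x ≤ g x + c) :
    sSup (f '' K) ≤ sSup (g '' K) + c :=
  csSup_le (hK.image f) <| Set.forall_mem_image.2 fun x hx =>
    (hfg x hx).trans (add_le_add_left (le_csSup hg (Set.mem_image_of_mem g hx)) c)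

lemma abs_sSup_image_sub_sSup_image_le {α : Type*} {K : Set α} {f g : α → ℝ} {c : ℝ}
    (hK : K.Nonempty) (hf : BddAbove (f '' K)) (hg : BddAbove (g '' K))
    (hfg : ∀ x ∈ K, |f x - g x| ≤ c) : |sSup (f '' K) - sSup (g '' K)| ≤ c := by
  have hfg' : ∀ x ∈ K, f x ≤ g x + c := fun x hx => by linarith [(abs_le.1 (hfg x hx)).2]
  have hgf' : ∀ x ∈ K, g x ≤ f x + c := fun x hx => by linarith [(abs_le.1 (hfg x hx)).1]
  have h₁ := sSup_image_le_sSup_image_add hK hg hfg'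
  have h₂ := sSup_image_le_sSup_image_add hK hf hgf'
  exact abs_sub_le_iff.2 ⟨by linarith, by linarith⟩

lemma abs_sum_mul_bellman_sub_le {S A : Type*} [Fintype S] [Fintype A]
    {P : A → S → ℝ} (hP : ∀ a, P a ∈ stdSimplex ℝ S) (r : A → ℝ)
    {γ : ℝ} (hγ : 0 ≤ γ)
    {μ : A → ℝ} (hμ : μ ∈ stdSimplex ℝ A) (v w : S → ℝ) :
    |∑ a, μ a * (r a + γ * ∑ s', P a s' * v s') -
        ∑ a, μ a * (r a + γ * ∑ s', P a s' * w s')| ≤ γ * ‖v - w‖ := by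
  set y : A → ℝ := fun a => ∑ s', P a s' * (v - w) s'
  have hdiff : ∑ a, μ a * (r a + γ * ∑ s', P a s' * v s') -
      ∑ a, μ a * (r a + γ * ∑ s', P a s' * w s') =
      γ * ∑ a, μ a * y a := by
    rw [← sum_sub_distrib, mul_sum]
    refine sum_congr rfl fun a _ => ?_
    simp only [y, Pi.sub_apply, mul_sub, sum_sub_distrib]
    ring
  have hy : ‖y‖ ≤ ‖v - w‖ := (pi_norm_le_iff_of_nonneg (norm_nonneg _)).2 fun a =>
    (Real.norm_eq_abs _).trans_le (abs_sum_mul_le_norm_of_mem_stdSimplex (hP a) (v - w))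
  rw [hdiff, abs_mul, abs_of_nonneg hγ]
  exact mul_le_mul_of_nonneg_left ((abs_sum_mul_le_norm_of_mem_stdSimplex hμ y).trans hy) hγ

theorem regularized_bellman_optimality_operator_contraction_general
    {S A : Type*} [Fintype S] [Fintype A] [Nonempty A]
    (p : S → A → S → ℝ)
    (hp_nonneg : ∀ s a s', 0 ≤ p s a s')
    (hp_sum : ∀ s a, ∑ s', p s a s' = 1)
    (r : S → A → ℝ)
    (γ : ℝ) (hγ0 : 0 ≤ γ)
    (Ω : (A → ℝ) → ℝ)
    (hΩ : ContinuousOn Ω (stdSimplex ℝ A))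
    (T : (S → ℝ) → (S → ℝ))
    (hT : ∀ v s, T v s =
      sSup ((fun μ => (∑ a, μ a * (r s a + γ * ∑ s', p s a s' * v s')) - Ω μ) ''
        stdSimplex ℝ A)) :
    (∀ v w : S → ℝ, ‖T v - T w‖ ≤ γ * ‖v - w‖) ∧
    (∀ (v : S → ℝ) (s : S), ∃ μ ∈ stdSimplex ℝ A,
      T v s = (∑ a, μ a * (r s a + γ * ∑ s', p s a s' * v s')) - Ω μ) := by
  have hK := isCompact_stdSimplex ℝ A
  have hne : (stdSimplex ℝ A).Nonempty := Set.nonempty_coe_sort.1 inferInstance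
  have hcont : ∀ (v : S → ℝ) s, ContinuousOn
      (fun μ : A → ℝ => (∑ a, μ a * (r s a + γ * ∑ s', p s a s' * v s')) - Ω μ)
      (stdSimplex ℝ A) := fun v s =>
    (continuous_finsetSum _ fun a _ =>
      (continuous_apply a).mul continuous_const).continuousOn.sub hΩ
  refine ⟨fun v w => ?_, fun v s => ?_⟩
  · refine (pi_norm_le_iff_of_nonneg (by positivity)).2 fun s => ?_
    rw [Real.norm_eq_abs, Pi.sub_apply, hT, hT]
    refine abs_sSup_image_sub_sSup_image_le hne (hK.bddAbove_image (hcont v s))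
      (hK.bddAbove_image (hcont w s)) fun μ hμ => ?_
    rw [sub_sub_sub_cancel_right]
    exact abs_sum_mul_bellman_sub_le (fun a => ⟨hp_nonneg s a, hp_sum s a⟩) (r s) hγ0 hμ v w
  · obtain ⟨μ, hμ, h⟩ := hK.exists_sSup_image_eq hne (hcont v s)
    exact ⟨μ, hμ, (hT v s).trans h⟩

/-- The regularized Bellman optimality operator
`[T_Ω v](s) = sup_{μ ∈ Δ_A} ( Σ_a μ(a)(r(s,a) + γ Σ_{s'} p(s'|s,a) v(s')) − Ω(μ) )`
is a γ-contraction in the supremum norm, and the supremum is attained for each `s`. -/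
theorem regularized_bellman_optimality_operator_contraction
    {S A : Type*} [Fintype S] [Fintype A] [Nonempty S] [Nonempty A]
    (p : S → A → S → ℝ)
    (hp_nonneg : ∀ s a s', 0 ≤ p s a s')
    (hp_sum : ∀ s a, ∑ s', p s a s' = 1)
    (r : S → A → ℝ)
    (γ : ℝ) (hγ0 : 0 ≤ γ) (hγ1 : γ < 1)
    (Ω : (A → ℝ) → ℝ)
    (hΩ : ContinuousOn Ω (stdSimplex ℝ A))
    (T : (S → ℝ) → (S → ℝ))
    (hT : ∀ v s, T v s =
      sSup ((fun μ => (∑ a, μ a * (r s a + γ * ∑ s', p s a s' * v s')) - Ω μ) ''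
        stdSimplex ℝ A)) :
    (∀ v w : S → ℝ, ‖T v - T w‖ ≤ γ * ‖v - w‖) ∧
    (∀ (v : S → ℝ) (s : S), ∃ μ ∈ stdSimplex ℝ A,
      T v s = (∑ a, μ a * (r s a + γ * ∑ s', p s a s' * v s')) - Ω μ) :=
  regularized_bellman_optimality_operator_contraction_general p hp_nonneg hp_sum r γ hγ0 Ω hΩ T hT
end

section
/- Let P be an n×n row-stochastic matrix with stationary distribution ν (νᵀ P = νᵀ) having all components positive, let N = diag(ν), and let γ ∈ [0,1). Then the matrix N(I − γP) is positive definite in the sense that xᵀ N (I − γP) x ≥ (1 − γ) xᵀ N x > 0 for every nonzero x ∈ ℝⁿ. -/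
open Matrix

/-- For a row-stochastic `P` with everywhere-positive stationary distribution
`ν`, `N = diag(ν)`, and `γ ∈ [0,1)`, the matrix `N(I − γP)` is positive definite:
`xᵀ N (I − γP) x ≥ (1 − γ) xᵀ N x > 0` for every nonzero `x`. -/
theorem weighted_bellman_matrix_positive_definite
    {n : ℕ}
    (P : Matrix (Fin n) (Fin n) ℝ)
    (hP_nonneg : ∀ i j, 0 ≤ P i j)
    (hP_rowsum : ∀ i, ∑ j, P i j = 1)
    (ν : Fin n → ℝ)
    (hν_pos : ∀ i, 0 < ν i)
    (hν_sum : ∑ i, ν i = 1)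
    (hν_stat : Matrix.vecMul ν P = ν)
    (N : Matrix (Fin n) (Fin n) ℝ) (hN : N = Matrix.diagonal ν)
    (γ : ℝ) (hγ0 : 0 ≤ γ) (hγ1 : γ < 1) :
    ∀ x : Fin n → ℝ, x ≠ 0 →
      (1 - γ) * (x ⬝ᵥ N.mulVec x) ≤ x ⬝ᵥ (N * (1 - γ • P)).mulVec x ∧
      0 < (1 - γ) * (x ⬝ᵥ N.mulVec x) := by
  subst hN
  intro x hx
  have hSpos : 0 < ∑ i, ν i * x i ^ 2 := by
    obtain ⟨i, hi⟩ := Function.ne_iff.mp hx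
    have hi' : x i ≠ 0 := by simpa using hi
    refine Finset.sum_pos' (fun j _ => mul_nonneg (hν_pos j).le (sq_nonneg _))
      ⟨i, Finset.mem_univ i, mul_pos (hν_pos i) (by positivity)⟩
  have hquad : x ⬝ᵥ (Matrix.diagonal ν).mulVec x = ∑ i, ν i * x i ^ 2 := by
    simp only [dotProduct, Matrix.mulVec_diagonal]
    exact Finset.sum_congr rfl (fun i _ => by ring)
  -- the cross term
  have hQ : x ⬝ᵥ ((Matrix.diagonal ν) * P).mulVec x
      = ∑ i, ∑ j, ν i * P i j * (x i * x j) := by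
    simp only [dotProduct, Matrix.mulVec, Matrix.diagonal_mul, Finset.mul_sum]
    refine Finset.sum_congr rfl (fun i _ => Finset.sum_congr rfl (fun j _ => by ring))
  have key : ∑ i, ∑ j, ν i * P i j * (x i * x j) ≤ ∑ i, ν i * x i ^ 2 := by
    have h1 : ∑ i, ∑ j, ν i * P i j * (x i * x j)
        ≤ ∑ i, ∑ j, ν i * P i j * ((x i ^ 2 + x j ^ 2) / 2) := by
      refine Finset.sum_le_sum (fun i _ => Finset.sum_le_sum (fun j _ => ?_))
      have hab : x i * x j ≤ (x i ^ 2 + x j ^ 2) / 2 := by nlinarith [sq_nonneg (x i - x j)]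
      exact mul_le_mul_of_nonneg_left hab (mul_nonneg (hν_pos i).le (hP_nonneg i j))
    have h2 : ∑ i, ∑ j, ν i * P i j * ((x i ^ 2 + x j ^ 2) / 2)
        = ∑ i, ν i * x i ^ 2 := by
      have e1 : ∀ i, ∑ j, ν i * P i j * (x i ^ 2 / 2) = ν i * x i ^ 2 / 2 := by
        intro i
        rw [← Finset.sum_mul]
        rw [← Finset.mul_sum, hP_rowsum i]
        ring
      have e2 : ∑ j, (∑ i, ν i * P i j) * (x j ^ 2 / 2) = ∑ j, ν j * x j ^ 2 / 2 := by
        refine Finset.sum_congr rfl (fun j _ => ?_)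
        have : ∑ i, ν i * P i j = ν j := by
          have := congrFun hν_stat j
          simpa [Matrix.vecMul, dotProduct] using this
        rw [this]; ring
      calc ∑ i, ∑ j, ν i * P i j * ((x i ^ 2 + x j ^ 2) / 2)
          = ∑ i, ∑ j, (ν i * P i j * (x i ^ 2 / 2) + ν i * P i j * (x j ^ 2 / 2)) := by
            refine Finset.sum_congr rfl (fun i _ => Finset.sum_congr rfl (fun j _ => by ring))
        _ = (∑ i, ∑ j, ν i * P i j * (x i ^ 2 / 2))
            + ∑ i, ∑ j, ν i * P i j * (x j ^ 2 / 2) := by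
            rw [← Finset.sum_add_distrib]
            exact Finset.sum_congr rfl (fun i _ => Finset.sum_add_distrib)
        _ = (∑ i, ν i * x i ^ 2 / 2) + ∑ j, (∑ i, ν i * P i j) * (x j ^ 2 / 2) := by
            congr 1
            · exact Finset.sum_congr rfl (fun i _ => e1 i)
            · rw [Finset.sum_comm]
              exact Finset.sum_congr rfl (fun j _ => (Finset.sum_mul _ _ _).symm)
        _ = ∑ i, ν i * x i ^ 2 := by
            rw [e2, ← Finset.sum_add_distrib]
            exact Finset.sum_congr rfl (fun i _ => by ring)
    linarith
  have hsplit : x ⬝ᵥ ((Matrix.diagonal ν) * (1 - γ • P)).mulVec x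
      = (x ⬝ᵥ (Matrix.diagonal ν).mulVec x)
        - γ * (x ⬝ᵥ ((Matrix.diagonal ν) * P).mulVec x) := by
    rw [Matrix.mul_sub, Matrix.mul_one, Matrix.mul_smul, Matrix.sub_mulVec,
      Matrix.smul_mulVec, dotProduct_sub, dotProduct_smul]
    simp [smul_eq_mul]
  constructor
  · rw [hsplit, hquad, hQ]
    have := mul_le_mul_of_nonneg_left key hγ0
    linarith
  · rw [hquad]
    have : 0 < 1 - γ := by linarith
    positivity
end

section
/- Let P be an n×n row-stochastic matrix with stationary distribution ν (νᵀ P = νᵀ) having all components positive, N = diag(ν), γ ∈ [0,1), and let Φ be an n×K real matrix with linearly independent columns. Then the K×K matrix Φᵀ N (I − γP) Φ is invertible. -/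
/-!
Under stationarity `νᵀP = νᵀ`, Jensen's inequality for the stochastic rows of `P` makes `P`
a contraction for the weighted norm `‖x‖²_ν = ∑ ν i * x i ^ 2`, so `⟪x, P x⟫_ν ≤ ‖x‖²_ν` and
the (non-symmetric) form `xᵀ N (I - γP) x` is at least `(1 - γ) ‖x‖²_ν > 0` for `x ≠ 0`.
Pulling back along the injective map `Φ` keeps the form positive, and a matrix with a
positive quadratic form has trivial kernel.
-/

open Matrix

namespace Matrix

variable {ι κ : Type*} [Fintype ι]

lemma dotProduct_transpose_mul_mul_mulVec {R : Type*} [CommSemiring R] [Fintype κ]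
    (A : Matrix ι ι R) (Φ : Matrix ι κ R) (c : κ → R) :
    c ⬝ᵥ (Φᵀ * A * Φ) *ᵥ c = (Φ *ᵥ c) ⬝ᵥ A *ᵥ (Φ *ᵥ c) := by
  rw [← mulVec_mulVec, ← mulVec_mulVec, dotProduct_mulVec, vecMul_transpose]

lemma isUnit_of_forall_dotProduct_mulVec_pos {R : Type*} [Field R] [LinearOrder R]
    [IsStrictOrderedRing R] [DecidableEq ι] {A : Matrix ι ι R}
    (hA : ∀ x ≠ 0, 0 < x ⬝ᵥ A *ᵥ x) : IsUnit A := by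
  rw [isUnit_iff_isUnit_det, isUnit_iff_ne_zero, ne_eq, ← exists_mulVec_eq_zero_iff]
  rintro ⟨x, hx0, hx⟩
  simpa [hx] using hA x hx0

lemma forall_dotProduct_transpose_mul_mul_mulVec_pos {R : Type*} [CommSemiring R]
    [PartialOrder R] [Fintype κ] {A : Matrix ι ι R} (hA : ∀ x ≠ 0, 0 < x ⬝ᵥ A *ᵥ x)
    {Φ : Matrix ι κ R} (hΦ : Function.Injective Φ.mulVec) (c : κ → R) (hc : c ≠ 0) :
    0 < c ⬝ᵥ (Φᵀ * A * Φ) *ᵥ c := by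
  rw [dotProduct_transpose_mul_mul_mulVec]
  exact hA _ fun h ↦ hc (hΦ (h.trans (mulVec_zero Φ).symm))

section Stochastic

variable [DecidableEq ι] {P : Matrix ι ι ℝ}

lemma sq_mulVec_le_mulVec_sq_of_mem_rowStochastic (hP : P ∈ rowStochastic ℝ ι)
    (x : ι → ℝ) : (P *ᵥ x) ^ 2 ≤ P *ᵥ (x ^ 2) := fun i ↦ by
  simpa [mulVec, dotProduct] using
    even_two.convexOn_pow.map_sum_le (t := Finset.univ) (w := P i) (p := x)
      (fun j _ ↦ nonneg_of_mem_rowStochastic hP) (sum_row_of_mem_rowStochastic hP i)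
      (fun _ _ ↦ Set.mem_univ _)

variable {ν : ι → ℝ}

lemma dotProduct_sq_mulVec_le_of_vecMul_eq (hP : P ∈ rowStochastic ℝ ι) (hν : 0 ≤ ν)
    (hstat : ν ᵥ* P = ν) (x : ι → ℝ) : ν ⬝ᵥ (P *ᵥ x) ^ 2 ≤ ν ⬝ᵥ x ^ 2 :=
  calc ν ⬝ᵥ (P *ᵥ x) ^ 2 ≤ ν ⬝ᵥ P *ᵥ (x ^ 2) :=
        dotProduct_le_dotProduct_of_nonneg_left
          (sq_mulVec_le_mulVec_sq_of_mem_rowStochastic hP x) hν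
    _ = ν ⬝ᵥ x ^ 2 := by rw [dotProduct_mulVec, hstat]

lemma dotProduct_mul_mulVec_le_of_vecMul_eq (hP : P ∈ rowStochastic ℝ ι) (hν : 0 ≤ ν)
    (hstat : ν ᵥ* P = ν) (x : ι → ℝ) : ν ⬝ᵥ (x * P *ᵥ x) ≤ ν ⬝ᵥ x ^ 2 := by
  have hamgm : x * P *ᵥ x ≤ (1 / 2 : ℝ) • (x ^ 2 + (P *ᵥ x) ^ 2) := fun i ↦ by
    have := two_mul_le_add_sq (x i) ((P *ᵥ x) i)
    simp only [Pi.mul_apply, Pi.smul_apply, Pi.add_apply, Pi.pow_apply, smul_eq_mul]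
    linarith
  calc ν ⬝ᵥ (x * P *ᵥ x) ≤ ν ⬝ᵥ ((1 / 2 : ℝ) • (x ^ 2 + (P *ᵥ x) ^ 2)) :=
        dotProduct_le_dotProduct_of_nonneg_left hamgm hν
    _ = (1 / 2) * (ν ⬝ᵥ x ^ 2 + ν ⬝ᵥ (P *ᵥ x) ^ 2) := by
        rw [dotProduct_smul, dotProduct_add, smul_eq_mul]
    _ ≤ ν ⬝ᵥ x ^ 2 := by linarith [dotProduct_sq_mulVec_le_of_vecMul_eq hP hν hstat x]

lemma dotProduct_diagonal_mul_one_sub_smul_mulVec (γ : ℝ) (x : ι → ℝ) :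
    x ⬝ᵥ (diagonal ν * (1 - γ • P)) *ᵥ x = ν ⬝ᵥ x ^ 2 - γ * ν ⬝ᵥ (x * P *ᵥ x) := by
  simp only [← mulVec_mulVec, sub_mulVec, one_mulVec, smul_mulVec, mulVec_diagonal,
    dotProduct, Pi.sub_apply, Pi.smul_apply, Pi.mul_apply, Pi.pow_apply, smul_eq_mul,
    Finset.mul_sum, ← Finset.sum_sub_distrib]
  exact Finset.sum_congr rfl fun i _ ↦ by ring

lemma dotProduct_diagonal_mul_one_sub_smul_mulVec_pos (hP : P ∈ rowStochastic ℝ ι)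
    (hν : ∀ i, 0 < ν i) (hstat : ν ᵥ* P = ν) {γ : ℝ} (hγ0 : 0 ≤ γ) (hγ1 : γ < 1)
    (x : ι → ℝ) (hx : x ≠ 0) : 0 < x ⬝ᵥ (diagonal ν * (1 - γ • P)) *ᵥ x := by
  have hnorm : 0 < ν ⬝ᵥ x ^ 2 := by
    obtain ⟨i, hi⟩ := Function.ne_iff.mp hx
    exact Finset.sum_pos' (fun j _ ↦ mul_nonneg (hν j).le (sq_nonneg _))
      ⟨i, Finset.mem_univ _, mul_pos (hν i) (sq_pos_of_ne_zero hi)⟩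
  have hcross := dotProduct_mul_mulVec_le_of_vecMul_eq hP (fun i ↦ (hν i).le) hstat x
  rw [dotProduct_diagonal_mul_one_sub_smul_mulVec]
  nlinarith

end Stochastic

end Matrix

theorem projected_bellman_matrix_invertible_general
    {n K : ℕ}
    (P : Matrix (Fin n) (Fin n) ℝ)
    (hP_nonneg : ∀ i j, 0 ≤ P i j)
    (hP_rowsum : ∀ i, ∑ j, P i j = 1)
    (ν : Fin n → ℝ)
    (hν_pos : ∀ i, 0 < ν i)
    (hν_stat : Matrix.vecMul ν P = ν)
    (N : Matrix (Fin n) (Fin n) ℝ) (hN : N = Matrix.diagonal ν)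
    (γ : ℝ) (hγ0 : 0 ≤ γ) (hγ1 : γ < 1)
    (Φ : Matrix (Fin n) (Fin K) ℝ)
    (hΦ : LinearIndependent ℝ Φᵀ) :
    IsUnit (Φᵀ * N * (1 - γ • P) * Φ) := by
  subst hN
  have hP : P ∈ rowStochastic ℝ (Fin n) := mem_rowStochastic_iff_sum.mpr ⟨hP_nonneg, hP_rowsum⟩
  rw [Matrix.mul_assoc Φᵀ]
  exact isUnit_of_forall_dotProduct_mulVec_pos <|
    forall_dotProduct_transpose_mul_mul_mulVec_pos
      (dotProduct_diagonal_mul_one_sub_smul_mulVec_pos hP hν_pos hν_stat hγ0 hγ1)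
      (mulVec_injective_iff.mpr hΦ)

/-- For a row-stochastic `P` with everywhere-positive stationary
distribution `ν`, `N = diag(ν)`, `γ ∈ [0,1)`, and `Φ` with linearly independent columns,
the `K×K` matrix `Φᵀ N (I − γP) Φ` is invertible. -/
theorem projected_bellman_matrix_invertible
    {n K : ℕ}
    (P : Matrix (Fin n) (Fin n) ℝ)
    (hP_nonneg : ∀ i j, 0 ≤ P i j)
    (hP_rowsum : ∀ i, ∑ j, P i j = 1)
    (ν : Fin n → ℝ)
    (hν_pos : ∀ i, 0 < ν i)
    (hν_sum : ∑ i, ν i = 1)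
    (hν_stat : Matrix.vecMul ν P = ν)
    (N : Matrix (Fin n) (Fin n) ℝ) (hN : N = Matrix.diagonal ν)
    (γ : ℝ) (hγ0 : 0 ≤ γ) (hγ1 : γ < 1)
    (Φ : Matrix (Fin n) (Fin K) ℝ)
    (hΦ : LinearIndependent ℝ Φᵀ) :
    IsUnit (Φᵀ * N * (1 - γ • P) * Φ) :=
  projected_bellman_matrix_invertible_general P hP_nonneg hP_rowsum ν hν_pos hν_stat N hN γ hγ0 hγ1
    Φ hΦ
end

section
/- Let P be an n×n row-stochastic matrix with stationary distribution ν (νᵀ P = νᵀ) having all components positive, N = diag(ν), γ ∈ [0,1), and let Φ ∈ ℝ^{n×K} have linearly independent columns. Then the origin is a globally asymptotically stable equilibrium of the linear ODE ẏ = A y with A = Φᵀ N ( γP − I ) Φ; in particular, for every x ∈ ℝ^K, ‖exp(tA) x‖ → 0 as t → ∞. -/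
/-!
Write `⟨u, w⟩_ν = ∑ ν i u i w i`. Jensen's inequality for the rows of `P` together with
stationarity of `ν` makes `P` a contraction for `‖·‖_ν`, so by AM-GM
`⟨v, (γP - I) v⟩_ν ≤ (γ - 1) ‖v‖_ν² < 0` for `v ≠ 0`. Since `Φ` is injective, the quadratic form
`y ↦ yᵀ A y` is negative definite, hence bounded by `-c ‖y‖²` for some `c > 0` (compactness of the
unit sphere). Along a trajectory `y` of `ẏ = A y` the Lyapunov function `‖y‖²` then satisfies
`d/dt ‖y‖² ≤ -2c ‖y‖²` and decays exponentially.
-/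

open Matrix Filter

section Stochastic

variable {ι : Type*} [Fintype ι] [DecidableEq ι] {P : Matrix ι ι ℝ}

theorem sq_mulVec_le_mulVec_sq (hP : P ∈ rowStochastic ℝ ι) (v : ι → ℝ) :
    (P *ᵥ v) ^ 2 ≤ P *ᵥ v ^ 2 := fun i => by
  simpa [mulVec, dotProduct] using (Even.convexOn_pow even_two).map_sum_le
    (fun j _ => hP.1 i j) (sum_row_of_mem_rowStochastic hP i) (fun j _ => Set.mem_univ (v j))

theorem dotProduct_mulVec_sq_le (hP : P ∈ rowStochastic ℝ ι) {ν : ι → ℝ} (hν : 0 ≤ ν)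
    (hν_stat : ν ᵥ* P = ν) (v : ι → ℝ) : ν ⬝ᵥ (P *ᵥ v) ^ 2 ≤ ν ⬝ᵥ v ^ 2 :=
  calc ν ⬝ᵥ (P *ᵥ v) ^ 2 ≤ ν ⬝ᵥ P *ᵥ v ^ 2 :=
        dotProduct_le_dotProduct_of_nonneg_left (sq_mulVec_le_mulVec_sq hP v) hν
    _ = ν ⬝ᵥ v ^ 2 := by rw [dotProduct_mulVec, hν_stat]

theorem dotProduct_diagonal_mulVec_smul_sub_one_mulVec_neg (hP : P ∈ rowStochastic ℝ ι)
    {ν : ι → ℝ} (hν : ∀ i, 0 < ν i) (hν_stat : ν ᵥ* P = ν) {γ : ℝ} (hγ0 : 0 ≤ γ) (hγ1 : γ < 1)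
    {v : ι → ℝ} (hv : v ≠ 0) : v ⬝ᵥ (diagonal ν *ᵥ ((γ • P - 1) *ᵥ v)) < 0 := by
  have hexpand : v ⬝ᵥ (diagonal ν *ᵥ ((γ • P - 1) *ᵥ v)) =
      γ * (ν ⬝ᵥ (v * P *ᵥ v)) - ν ⬝ᵥ v ^ 2 := by
    simp only [dotProduct, mulVec_diagonal, sub_mulVec, smul_mulVec, one_mulVec, Pi.sub_apply,
      Pi.smul_apply, Pi.mul_apply, Pi.pow_apply, smul_eq_mul, Finset.mul_sum,
      ← Finset.sum_sub_distrib]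
    exact Finset.sum_congr rfl fun i _ => by ring
  have hcross : ν ⬝ᵥ (v * P *ᵥ v) ≤ ν ⬝ᵥ v ^ 2 := by
    have hamgm : (2 : ℝ) • (v * P *ᵥ v) ≤ v ^ 2 + (P *ᵥ v) ^ 2 := fun i => by
      simpa [mul_assoc] using two_mul_le_add_sq (v i) ((P *ᵥ v) i)
    have := dotProduct_le_dotProduct_of_nonneg_left hamgm (fun i => (hν i).le)
    rw [dotProduct_smul, dotProduct_add, smul_eq_mul] at this
    linarith [dotProduct_mulVec_sq_le hP (fun i => (hν i).le) hν_stat v]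
  have hnorm : 0 < ν ⬝ᵥ v ^ 2 := by
    obtain ⟨j, hj⟩ := Function.ne_iff.mp hv
    exact Finset.sum_pos' (fun i _ => mul_nonneg (hν i).le (sq_nonneg (v i)))
      ⟨j, Finset.mem_univ j, mul_pos (hν j) (sq_pos_of_ne_zero hj)⟩
  rw [hexpand]
  nlinarith [mul_le_mul_of_nonneg_left hcross hγ0]

end Stochastic

theorem dotProduct_transpose_mul_mul_mulVec_neg {m n : Type*} [Fintype m] [Fintype n]
    {B : Matrix m m ℝ} (hB : ∀ v ≠ 0, v ⬝ᵥ (B *ᵥ v) < 0) {Φ : Matrix m n ℝ}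
    (hΦ : LinearIndependent ℝ Φᵀ) {y : n → ℝ} (hy : y ≠ 0) :
    y ⬝ᵥ ((Φᵀ * B * Φ) *ᵥ y) < 0 := by
  have hΦy : Φ *ᵥ y ≠ 0 := fun h =>
    hy (mulVec_injective_iff.2 hΦ (h.trans (mulVec_zero Φ).symm))
  simpa only [← mulVec_mulVec, dotProduct_mulVec y Φᵀ, vecMul_transpose] using hB _ hΦy

section Stability

variable {ι : Type*} [Fintype ι] {A : Matrix ι ι ℝ}

theorem exists_pos_dotProduct_mulVec_le_neg_mul (hA : ∀ v ≠ 0, v ⬝ᵥ (A *ᵥ v) < 0) :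
    ∃ c > 0, ∀ v, v ⬝ᵥ (A *ᵥ v) ≤ -c * (v ⬝ᵥ v) := by
  rcases subsingleton_or_nontrivial (ι → ℝ) with _ | _
  · exact ⟨1, one_pos, fun v => by simp [Subsingleton.elim v 0]⟩
  have hpos : ∀ v : ι → ℝ, v ≠ 0 → 0 < v ⬝ᵥ v := fun v hv =>
    lt_of_le_of_ne (dotProduct_self_star_nonneg v) (Ne.symm (mt dotProduct_self_eq_zero.1 hv))
  set R : (ι → ℝ) → ℝ := fun v => v ⬝ᵥ (A *ᵥ v) / (v ⬝ᵥ v)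
  have hR_smul : ∀ (r : ℝ) v, r ≠ 0 → R (r • v) = R v := fun r v hr => by
    simp only [R, mulVec_smul, dotProduct_smul, smul_dotProduct, smul_eq_mul]
    rw [mul_div_mul_left _ _ hr, mul_div_mul_left _ _ hr]
  have hR_cont : ContinuousOn R (Metric.sphere 0 1) := by
    refine ContinuousOn.div (by fun_prop) (by fun_prop) fun v hv => (hpos v ?_).ne'
    exact ne_zero_of_mem_sphere one_ne_zero ⟨v, hv⟩
  obtain ⟨u, hu, hmax⟩ := (isCompact_sphere (0 : ι → ℝ) 1).exists_isMaxOn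
    (NormedSpace.sphere_nonempty.2 zero_le_one) hR_cont
  have hu0 : u ≠ 0 := ne_zero_of_mem_sphere one_ne_zero ⟨u, hu⟩
  refine ⟨-R u, neg_pos.2 (div_neg_of_neg_of_pos (hA u hu0) (hpos u hu0)), fun v => ?_⟩
  rcases eq_or_ne v 0 with rfl | hv
  · simp
  have hvu : R v ≤ R u := by
    rw [← hR_smul ‖v‖⁻¹ v (inv_ne_zero (norm_ne_zero_iff.2 hv))]
    exact hmax (by simp [norm_smul, norm_ne_zero_iff.2 hv])
  rw [neg_neg]
  exact (div_le_iff₀ (hpos v hv)).1 hvu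

theorem norm_le_sqrt_dotProduct_self (v : ι → ℝ) : ‖v‖ ≤ √(v ⬝ᵥ v) :=
  (pi_norm_le_iff_of_nonneg (Real.sqrt_nonneg _)).2 fun i => Real.abs_le_sqrt <| by
    simpa only [sq, dotProduct] using
      Finset.single_le_sum (fun j _ => mul_self_nonneg (v j)) (Finset.mem_univ i)

theorem dotProduct_self_le_exp_mul_of_hasDerivAt {y : ℝ → ι → ℝ} {c : ℝ}
    (hy : ∀ t, HasDerivAt y (A *ᵥ y t) t) (hA : ∀ v, v ⬝ᵥ (A *ᵥ v) ≤ -c * (v ⬝ᵥ v))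
    {t : ℝ} (ht : 0 ≤ t) : y t ⬝ᵥ y t ≤ Real.exp (-(2 * c * t)) * (y 0 ⬝ᵥ y 0) := by
  have hE : ∀ s, HasDerivAt (fun s => y s ⬝ᵥ y s) (2 * (y s ⬝ᵥ (A *ᵥ y s))) s := fun s => by
    have := HasDerivAt.fun_sum fun i (_ : i ∈ Finset.univ) =>
      (hasDerivAt_pi.1 (hy s) i).fun_mul (hasDerivAt_pi.1 (hy s) i)
    refine this.congr_deriv ?_
    simp only [dotProduct, Finset.mul_sum]
    exact Finset.sum_congr rfl fun i _ => by ring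
  set g : ℝ → ℝ := fun s => Real.exp (2 * c * s) * (y s ⬝ᵥ y s)
  have hg : ∀ s, HasDerivAt g (Real.exp (2 * c * s) * (2 * c) * (y s ⬝ᵥ y s) +
      Real.exp (2 * c * s) * (2 * (y s ⬝ᵥ (A *ᵥ y s)))) s := fun s =>
    (((hasDerivAt_id s).const_mul (2 * c)).exp.congr_deriv (by simp)).mul (hE s)
  have hg_anti : Antitone g :=
    antitone_of_deriv_nonpos (fun s => (hg s).differentiableAt) fun s => by
      rw [(hg s).deriv]
      nlinarith [hA (y s), Real.exp_pos (2 * c * s)]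
  have hg_le : g t ≤ g 0 := hg_anti ht
  simp only [g, mul_zero, Real.exp_zero, one_mul] at hg_le
  rw [Real.exp_neg, ← div_eq_inv_mul, le_div_iff₀' (Real.exp_pos _)]
  exact hg_le

theorem hasDerivAt_exp_smul_mulVec [DecidableEq ι] (A : Matrix ι ι ℝ) (x : ι → ℝ) (t : ℝ) :
    HasDerivAt (fun s : ℝ => NormedSpace.exp (s • A) *ᵥ x)
      (A *ᵥ (NormedSpace.exp (t • A) *ᵥ x)) t := by
  -- any normed-algebra structure inducing the product topology will do
  let _ := Matrix.linftyOpNormedRing (n := ι) (α := ℝ)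
  let _ := Matrix.linftyOpNormedAlgebra (n := ι) (R := ℝ) (α := ℝ)
  let L : Matrix ι ι ℝ →L[ℝ] ι → ℝ :=
    LinearMap.toContinuousLinearMap ((LinearMap.applyₗ x).comp Matrix.toLin'.toLinearMap)
  rw [mulVec_mulVec]
  exact L.hasFDerivAt.comp_hasDerivAt t (hasDerivAt_exp_smul_const' A t)

theorem tendsto_norm_exp_smul_mulVec_atTop [DecidableEq ι] (hA : ∀ v ≠ 0, v ⬝ᵥ (A *ᵥ v) < 0)
    (x : ι → ℝ) : Tendsto (fun t : ℝ => ‖NormedSpace.exp (t • A) *ᵥ x‖) atTop (nhds 0) := by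
  obtain ⟨c, hc, hcA⟩ := exists_pos_dotProduct_mulVec_le_neg_mul hA
  have hdecay : Tendsto (fun t => √(Real.exp (-(2 * c * t)) * (x ⬝ᵥ x))) atTop (nhds 0) := by
    simpa using ((Real.tendsto_exp_neg_atTop_nhds_zero.comp
      (tendsto_id.const_mul_atTop (by positivity : 0 < 2 * c))).mul_const (x ⬝ᵥ x)).sqrt
  refine squeeze_zero' (.of_forall fun t => norm_nonneg _) ?_ hdecay
  filter_upwards [eventually_ge_atTop 0] with t ht
  refine (norm_le_sqrt_dotProduct_self _).trans (Real.sqrt_le_sqrt ?_)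
  simpa using dotProduct_self_le_exp_mul_of_hasDerivAt (hasDerivAt_exp_smul_mulVec A x) hcA ht

end Stability

theorem critic_limit_ode_globally_asymptotically_stable_general
    {n K : ℕ}
    (P : Matrix (Fin n) (Fin n) ℝ)
    (hP_nonneg : ∀ i j, 0 ≤ P i j)
    (hP_rowsum : ∀ i, ∑ j, P i j = 1)
    (ν : Fin n → ℝ)
    (hν_pos : ∀ i, 0 < ν i)
    (hν_stat : Matrix.vecMul ν P = ν)
    (N : Matrix (Fin n) (Fin n) ℝ) (hN : N = Matrix.diagonal ν)
    (γ : ℝ) (hγ0 : 0 ≤ γ) (hγ1 : γ < 1)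
    (Φ : Matrix (Fin n) (Fin K) ℝ)
    (hΦ : LinearIndependent ℝ Φᵀ)
    (A : Matrix (Fin K) (Fin K) ℝ)
    (hA : A = Φᵀ * N * (γ • P - 1) * Φ) :
    ∀ x : Fin K → ℝ,
      Tendsto (fun t : ℝ => ‖(NormedSpace.exp (t • A)).mulVec x‖) atTop (nhds 0) := by
  subst hN hA
  have hP : P ∈ rowStochastic ℝ (Fin n) := mem_rowStochastic_iff_sum.2 ⟨hP_nonneg, hP_rowsum⟩
  have hB : ∀ v ≠ 0, v ⬝ᵥ ((diagonal ν * (γ • P - 1)) *ᵥ v) < 0 := fun v hv => by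
    rw [← mulVec_mulVec]
    exact dotProduct_diagonal_mulVec_smul_sub_one_mulVec_neg hP hν_pos hν_stat hγ0 hγ1 hv
  rw [Matrix.mul_assoc Φᵀ]
  exact tendsto_norm_exp_smul_mulVec_atTop fun y hy =>
    dotProduct_transpose_mul_mul_mulVec_neg hB hΦ hy

/-- For a row-stochastic `P` with everywhere-positive stationary
distribution `ν`, `N = diag(ν)`, `γ ∈ [0,1)`, and `Φ` with linearly independent columns,
the origin is globally asymptotically stable for `ẏ = Ay` with `A = Φᵀ N (γP − I) Φ`:
for every `x`, `‖exp(tA) x‖ → 0` as `t → ∞`. -/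
theorem critic_limit_ode_globally_asymptotically_stable
    {n K : ℕ}
    (P : Matrix (Fin n) (Fin n) ℝ)
    (hP_nonneg : ∀ i j, 0 ≤ P i j)
    (hP_rowsum : ∀ i, ∑ j, P i j = 1)
    (ν : Fin n → ℝ)
    (hν_pos : ∀ i, 0 < ν i)
    (hν_sum : ∑ i, ν i = 1)
    (hν_stat : Matrix.vecMul ν P = ν)
    (N : Matrix (Fin n) (Fin n) ℝ) (hN : N = Matrix.diagonal ν)
    (γ : ℝ) (hγ0 : 0 ≤ γ) (hγ1 : γ < 1)
    (Φ : Matrix (Fin n) (Fin K) ℝ)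
    (hΦ : LinearIndependent ℝ Φᵀ)
    (A : Matrix (Fin K) (Fin K) ℝ)
    (hA : A = Φᵀ * N * (γ • P - 1) * Φ) :
    ∀ x : Fin K → ℝ,
      Tendsto (fun t : ℝ => ‖(NormedSpace.exp (t • A)).mulVec x‖) atTop (nhds 0) :=
  critic_limit_ode_globally_asymptotically_stable_general P hP_nonneg hP_rowsum ν hν_pos hν_stat N
    hN γ hγ0 hγ1 Φ hΦ A hA
end

section
/- Let N be an n×n diagonal matrix with strictly positive diagonal entries, Φ ∈ ℝ^{n×K} with linearly independent columns, and let Π_N denote the orthogonal projection of ℝⁿ onto the column space of Φ with respect to the inner product ⟨x, y⟩_N = xᵀ N y. Let T : ℝⁿ → ℝⁿ be the affine map T q = r + γ P ( q − Ω_π ), where P is row-stochastic with stationary distribution ν = diag(N) having all components positive and γ ∈ [0,1). Then ω* = ( Φᵀ N (I − γP) Φ )⁻¹ Φᵀ N ( r − γ P Ω_π ) is well defined and is the unique ω ∈ ℝ^K satisfying the projected Bellman equation Φω = Π_N T(Φω). -/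
open Matrix


/-- Jensen: weighted square of averaged vector. -/
lemma aux_jensen {n : ℕ} (P : Matrix (Fin n) (Fin n) ℝ)
    (hP_nonneg : ∀ i j, 0 ≤ P i j) (hP_rowsum : ∀ i, ∑ j, P i j = 1)
    (ν : Fin n → ℝ) (hν_pos : ∀ i, 0 < ν i)
    (hν_stat : Matrix.vecMul ν P = ν) (x : Fin n → ℝ) :
    ∑ i, ν i * (P.mulVec x i) ^ 2 ≤ ∑ i, ν i * (x i) ^ 2 := by
  have step : ∀ i, (P.mulVec x i) ^ 2 ≤ ∑ j, P i j * (x j) ^ 2 := by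
    intro i
    have h := Finset.sum_mul_sq_le_sq_mul_sq Finset.univ
      (fun j => Real.sqrt (P i j)) (fun j => Real.sqrt (P i j) * x j)
    have h1 : ∀ j, Real.sqrt (P i j) * (Real.sqrt (P i j) * x j) = P i j * x j := by
      intro j
      rw [← mul_assoc, Real.mul_self_sqrt (hP_nonneg i j)]
    have h2 : ∀ j, (Real.sqrt (P i j)) ^ 2 = P i j := fun j => Real.sq_sqrt (hP_nonneg i j)
    have h3 : ∀ j, (Real.sqrt (P i j) * x j) ^ 2 = P i j * (x j) ^ 2 := by
      intro j; rw [mul_pow, h2]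
    simp only [h1, h2, h3, hP_rowsum i, one_mul] at h
    simpa [Matrix.mulVec, dotProduct] using h
  calc ∑ i, ν i * (P.mulVec x i) ^ 2
      ≤ ∑ i, ν i * ∑ j, P i j * (x j) ^ 2 := by
        apply Finset.sum_le_sum
        intro i _
        exact mul_le_mul_of_nonneg_left (step i) (hν_pos i).le
    _ = ∑ j, (ν ᵥ* P) j * (x j) ^ 2 := by
        simp_rw [Finset.mul_sum, Matrix.vecMul, dotProduct, Finset.sum_mul]
        rw [Finset.sum_comm]
        congr 1; ext j; congr 1; ext i; ring
    _ = ∑ i, ν i * (x i) ^ 2 := by rw [hν_stat]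

lemma aux_quadform {n K : ℕ} (B : Matrix (Fin n) (Fin n) ℝ)
    (Φ : Matrix (Fin n) (Fin K) ℝ) (u : Fin K → ℝ) :
    u ⬝ᵥ (Φᵀ * B * Φ).mulVec u = (Φ.mulVec u) ⬝ᵥ B.mulVec (Φ.mulVec u) := by
  rw [← Matrix.mulVec_mulVec, ← Matrix.mulVec_mulVec, Matrix.dotProduct_mulVec,
    Matrix.vecMul_transpose]

lemma aux_inj {n K : ℕ} (P : Matrix (Fin n) (Fin n) ℝ)
    (hP_nonneg : ∀ i j, 0 ≤ P i j) (hP_rowsum : ∀ i, ∑ j, P i j = 1)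
    (ν : Fin n → ℝ) (hν_pos : ∀ i, 0 < ν i)
    (hν_stat : Matrix.vecMul ν P = ν)
    (γ : ℝ) (hγ0 : 0 ≤ γ) (hγ1 : γ < 1)
    (Φ : Matrix (Fin n) (Fin K) ℝ) (hΦ : LinearIndependent ℝ Φᵀ)
    (u : Fin K → ℝ)
    (hu : (Φᵀ * Matrix.diagonal ν * (1 - γ • P) * Φ).mulVec u = 0) :
    u = 0 := by
  set x := Φ.mulVec u with hx
  have hq : u ⬝ᵥ (Φᵀ * (Matrix.diagonal ν * (1 - γ • P)) * Φ).mulVec u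
      = x ⬝ᵥ (Matrix.diagonal ν * (1 - γ • P)).mulVec x := aux_quadform _ Φ u
  rw [← Matrix.mul_assoc] at hq
  rw [hu, dotProduct_zero] at hq
  -- compute the quadratic form
  have hdiag : ∀ y : Fin n → ℝ, x ⬝ᵥ (Matrix.diagonal ν).mulVec y = ∑ i, ν i * (x i * y i) := by
    intro y
    simp [dotProduct, Matrix.mulVec_diagonal]
    congr 1; ext i; ring
  have hexp : (0:ℝ) = ∑ i, ν i * (x i)^2 - γ * ∑ i, ν i * (x i * P.mulVec x i) := by
    rw [hq, ← Matrix.mulVec_mulVec, Matrix.sub_mulVec, Matrix.one_mulVec,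
      Matrix.smul_mulVec, hdiag]
    rw [Finset.mul_sum, ← Finset.sum_sub_distrib]
    apply Finset.sum_congr rfl
    intro i _
    simp [Pi.sub_apply, Pi.smul_apply, smul_eq_mul]
    ring
  have hcross : ∑ i, ν i * (x i * P.mulVec x i)
      ≤ ∑ i, ν i * (x i)^2 := by
    have h2 : ∀ i, ν i * (x i * P.mulVec x i)
        ≤ ν i * ((x i)^2 + (P.mulVec x i)^2) / 2 := by
      intro i
      have : x i * P.mulVec x i ≤ ((x i)^2 + (P.mulVec x i)^2) / 2 := by nlinarith [sq_nonneg (x i - P.mulVec x i)]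
      calc ν i * (x i * P.mulVec x i) ≤ ν i * (((x i)^2 + (P.mulVec x i)^2)/2) :=
            mul_le_mul_of_nonneg_left this (hν_pos i).le
        _ = ν i * ((x i)^2 + (P.mulVec x i)^2) / 2 := by ring
    calc ∑ i, ν i * (x i * P.mulVec x i)
        ≤ ∑ i, ν i * ((x i)^2 + (P.mulVec x i)^2) / 2 := Finset.sum_le_sum fun i _ => h2 i
      _ = (∑ i, ν i * (x i)^2 + ∑ i, ν i * (P.mulVec x i)^2) / 2 := by
          rw [← Finset.sum_add_distrib, ← Finset.sum_div]
          congr 1; apply Finset.sum_congr rfl; intro i _; ring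
      _ ≤ (∑ i, ν i * (x i)^2 + ∑ i, ν i * (x i)^2) / 2 := by
          have := aux_jensen P hP_nonneg hP_rowsum ν hν_pos hν_stat x
          linarith
      _ = ∑ i, ν i * (x i)^2 := by ring
  have hSnn : 0 ≤ ∑ i, ν i * (x i)^2 :=
    Finset.sum_nonneg fun i _ => mul_nonneg (hν_pos i).le (sq_nonneg _)
  have hS0 : ∑ i, ν i * (x i)^2 = 0 := by nlinarith
  have hx0 : x = 0 := by
    funext i
    have hterm : ∀ i ∈ Finset.univ, (0:ℝ) ≤ ν i * (x i)^2 :=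
      fun i _ => mul_nonneg (hν_pos i).le (sq_nonneg _)
    have := (Finset.sum_eq_zero_iff_of_nonneg hterm).mp hS0 i (Finset.mem_univ i)
    have := mul_eq_zero.mp this
    rcases this with h | h
    · exact absurd h (hν_pos i).ne'
    · simpa using pow_eq_zero_iff (n := 2) (by norm_num) |>.mp h
  -- linear independence
  have : ∑ j, u j • Φᵀ j = 0 := by
    rw [← hx0, hx]
    funext i
    simp [Matrix.mulVec, dotProduct, Matrix.transpose_apply, mul_comm]
  exact funext fun j => (Fintype.linearIndependent_iff.mp hΦ u this) j

/-- With `Π_N` the `⟨·,·⟩_N`-orthogonal projection onto `Col(Φ)` and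
`T q = r + γ P (q − Ω_π)`, the vector `ω* = (Φᵀ N (I − γP) Φ)⁻¹ Φᵀ N (r − γ P Ω_π)` is
well defined and is the unique `ω` satisfying the projected Bellman equation
`Φω = Π_N T(Φω)`. -/
theorem projected_bellman_equation_unique_solution
    {n K : ℕ}
    (P : Matrix (Fin n) (Fin n) ℝ)
    (hP_nonneg : ∀ i j, 0 ≤ P i j)
    (hP_rowsum : ∀ i, ∑ j, P i j = 1)
    (ν : Fin n → ℝ)
    (hν_pos : ∀ i, 0 < ν i)
    (hν_sum : ∑ i, ν i = 1)
    (hν_stat : Matrix.vecMul ν P = ν)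
    (N : Matrix (Fin n) (Fin n) ℝ) (hN : N = Matrix.diagonal ν)
    (γ : ℝ) (hγ0 : 0 ≤ γ) (hγ1 : γ < 1)
    (Φ : Matrix (Fin n) (Fin K) ℝ)
    (hΦ : LinearIndependent ℝ Φᵀ)
    (r Ωπ : Fin n → ℝ)
    (T : (Fin n → ℝ) → (Fin n → ℝ))
    (hT : ∀ q, T q = r + γ • P.mulVec (q - Ωπ))
    (proj : (Fin n → ℝ) → (Fin n → ℝ))
    (hproj_mem : ∀ v : Fin n → ℝ, ∃ u : Fin K → ℝ, proj v = Φ.mulVec u)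
    (hproj_orth : ∀ (v : Fin n → ℝ) (u : Fin K → ℝ),
      (v - proj v) ⬝ᵥ N.mulVec (Φ.mulVec u) = 0) :
    IsUnit (Φᵀ * N * (1 - γ • P) * Φ) ∧
    ∀ ω : Fin K → ℝ,
      Φ.mulVec ω = proj (T (Φ.mulVec ω)) ↔
        ω = (Φᵀ * N * (1 - γ • P) * Φ)⁻¹.mulVec
          (Φᵀ.mulVec (N.mulVec (r - γ • P.mulVec Ωπ))) := by
  set A := Φᵀ * N * (1 - γ • P) * Φ with hA_def
  set b := Φᵀ.mulVec (N.mulVec (r - γ • P.mulVec Ωπ)) with hb_def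
  -- invertibility
  have hinj : Function.Injective A.mulVec := by
    intro u v huv
    have h0 : A.mulVec (u - v) = 0 := by
      rw [Matrix.mulVec_sub, huv, sub_self]
    have := aux_inj P hP_nonneg hP_rowsum ν hν_pos hν_stat γ hγ0 hγ1 Φ hΦ (u - v)
      (by rwa [hA_def, hN] at h0)
    exact sub_eq_zero.mp this
  have hAunit : IsUnit A := Matrix.mulVec_injective_iff_isUnit.mp hinj
  refine ⟨hAunit, fun ω => ?_⟩
  -- Gram matrix injectivity (γ = 0 case)
  have hGinj : ∀ w : Fin K → ℝ, (Φᵀ * N * Φ).mulVec w = 0 → w = 0 := by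
    intro w hw
    apply aux_inj P hP_nonneg hP_rowsum ν hν_pos hν_stat 0 le_rfl one_pos Φ hΦ w
    rw [← hN]
    simpa using hw
  -- N is symmetric in the bilinear-form sense: w ⬝ᵥ N (Φu) = (Φᵀ N w) ⬝ᵥ u
  have hsymm : ∀ (w : Fin n → ℝ) (u : Fin K → ℝ),
      w ⬝ᵥ N.mulVec (Φ.mulVec u) = (Φᵀ.mulVec (N.mulVec w)) ⬝ᵥ u := by
    intro w u
    calc w ⬝ᵥ N.mulVec (Φ.mulVec u) = (w ᵥ* N) ⬝ᵥ (Φ.mulVec u) :=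
          Matrix.dotProduct_mulVec _ _ _
      _ = (N.mulVec w) ⬝ᵥ (Φ.mulVec u) := by
          rw [hN]; congr 1; funext i
          simp [Matrix.vecMul_diagonal, Matrix.mulVec_diagonal, mul_comm]
      _ = ((N.mulVec w) ᵥ* Φ) ⬝ᵥ u := Matrix.dotProduct_mulVec _ _ _
      _ = (Φᵀ.mulVec (N.mulVec w)) ⬝ᵥ u := by rw [Matrix.mulVec_transpose]
  -- orthogonality in matrix form: Φᵀ N (v - proj v) = 0
  have horth' : ∀ v : Fin n → ℝ, Φᵀ.mulVec (N.mulVec (v - proj v)) = 0 := by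
    intro v
    funext k
    have := hproj_orth v (Pi.single k 1)
    rw [hsymm] at this
    simpa [dotProduct_single] using this
  -- key algebraic identity: Φᵀ N (T(Φω) - Φω) = b - A ω
  have hkey : ∀ ω : Fin K → ℝ,
      Φᵀ.mulVec (N.mulVec (T (Φ.mulVec ω) - Φ.mulVec ω)) = b - A.mulVec ω := by
    intro ω
    have hv : T (Φ.mulVec ω) - Φ.mulVec ω
        = (r - γ • P.mulVec Ωπ) - (1 - γ • P).mulVec (Φ.mulVec ω) := by
      rw [hT]
      rw [Matrix.sub_mulVec, Matrix.one_mulVec, Matrix.smul_mulVec,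
        Matrix.mulVec_sub]
      funext i
      simp [Pi.sub_apply, Pi.add_apply, Pi.smul_apply, smul_eq_mul]
      ring
    rw [hv, Matrix.mulVec_sub, Matrix.mulVec_sub, hA_def]
    congr 1
    rw [Matrix.mulVec_mulVec, Matrix.mulVec_mulVec, Matrix.mulVec_mulVec]
  constructor
  · -- forward
    intro h
    have h0 : Φᵀ.mulVec (N.mulVec (T (Φ.mulVec ω) - Φ.mulVec ω)) = 0 := by
      have := horth' (T (Φ.mulVec ω))
      rwa [← h] at this
    rw [hkey ω] at h0
    have hAb : A.mulVec ω = b := (sub_eq_zero.mp h0).symm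
    rw [← hAb, Matrix.mulVec_mulVec, Matrix.nonsing_inv_mul A
      (by rwa [← Matrix.isUnit_iff_isUnit_det]), Matrix.one_mulVec]
  · -- backward
    intro h
    have hAb : A.mulVec ω = b := by
      rw [h, Matrix.mulVec_mulVec, Matrix.mul_nonsing_inv A
        (by rwa [← Matrix.isUnit_iff_isUnit_det])]
      rw [Matrix.one_mulVec]
    have h0 : Φᵀ.mulVec (N.mulVec (T (Φ.mulVec ω) - Φ.mulVec ω)) = 0 := by
      rw [hkey ω, hAb, sub_self]
    obtain ⟨u₀, hu₀⟩ := hproj_mem (T (Φ.mulVec ω))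
    have h1 : Φᵀ.mulVec (N.mulVec (T (Φ.mulVec ω) - Φ.mulVec u₀)) = 0 := by
      have := horth' (T (Φ.mulVec ω))
      rwa [hu₀] at this
    have h2 : (Φᵀ * N * Φ).mulVec (u₀ - ω) = 0 := by
      have : Φᵀ.mulVec (N.mulVec (Φ.mulVec u₀ - Φ.mulVec ω)) = 0 := by
        have hsub : Φ.mulVec u₀ - Φ.mulVec ω
            = (T (Φ.mulVec ω) - Φ.mulVec ω) - (T (Φ.mulVec ω) - Φ.mulVec u₀) := by
          abel
        rw [hsub, Matrix.mulVec_sub, Matrix.mulVec_sub, h0, h1, sub_self]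
      rw [← Matrix.mulVec_sub Φ, Matrix.mulVec_mulVec, Matrix.mulVec_mulVec] at this
      exact this
    have := hGinj (u₀ - ω) h2
    have hu₀ω : u₀ = ω := sub_eq_zero.mp this
    rw [hu₀, hu₀ω]
end
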